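/- arXiv:2102.01787 — 3 statements merged into one kernel-verified Lean document; each statement's English description precedes it below -/
import Mathlib

section
/- Let d ≥ 3 and s₀ ≥ 0. Let f, h, x, y be continuously differentiable real functions with L(s,t) = st + h(s), f(y(s)) = L(s, y(s)) and −f(−x(s)) = L(s, −x(s)) for all s > s₀, with −x(s) < y(s) and f(t)² > L(s,t)² for t ∈ (−x(s), y(s)). Assume ∫_{−x(s)}^{y(s)} (t + h'(s)) (f(t)² − L(s,t)²)^{(d−2)/2} dt = 0 for all s > s₀, and that the function s ↦ γ_{d−2}√(1+s²)∫_{−x(s)}^{y(s)}(f(t)²−L(s,t)²)^{d/2}dt is bounded on (s₀, ∞). Then the following are equivalent, with the same constant c in both: (a) for all s > s₀, γ_{d−2}√(1+s²) ∫_{−x(s)}^{y(s)} (f(t)² − L(s,t)²)^{d/2} dt = c; (b) for all s > s₀, κ_{d−2}(1+s²)^{3/2} ∫_{−x(s)}^{y(s)} (t + h'(s))² (f(t)² − L(s,t)²)^{(d−2)/2} dt = c. -/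
open MeasureTheory Metric Filter intervalIntegral
open scoped ENNReal Topology

/-- `κ_m`, the volume of the unit Euclidean ball in `ℝ^m`. -/
noncomputable def kappa (m : ℕ) : ℝ :=
  (volume (closedBall (0 : EuclideanSpace ℝ (Fin m)) 1)).toReal

/-- `γ_m = ∫_{B₂^m} p_j² dp` (independent of the coordinate `j` by symmetry). -/
noncomputable def gammaBall (m : ℕ) (h0 : 0 < m) : ℝ :=
  ∫ p in closedBall (0 : EuclideanSpace ℝ (Fin m)) 1, (p ⟨0, h0⟩) ^ 2

/-! Differentiating `I₀(s) = ∫_{-x(s)}^{y(s)} (f² - L²)^{d/2} dt` under the integral sign, the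
endpoint terms vanish because `f² = L²` there, and writing `L = s (t + h') + (h - s h')` the
centroid condition kills the second part, so `I₀' = -d s I₂` with `I₂` the integral in (b).
Since `κ_{d-2} = d γ_{d-2}` (integrate `‖p‖²` over the ball once radially and once
coordinatewise), (a) and (b) read `W A = c` and `W³ B = c` with `W = √(1 + s²)`, `A = γ I₀`,
`B = κ I₂`, and `A' = -s B`. If `W A` is constant, differentiating gives `A = W² B`, whence (b).
Conversely, under (b) the function `A - c / W` has zero derivative, so `W A = K W + c`, and
boundedness forces `K = 0`. -/

theorem integral_closedBall_norm_sq {E : Type*} [NormedAddCommGroup E] [NormedSpace ℝ E]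
    [MeasurableSpace E] [BorelSpace E] [FiniteDimensional ℝ E] [Nontrivial E]
    (μ : Measure E) [μ.IsAddHaarMeasure] :
    ∫ p in closedBall (0 : E) 1, ‖p‖ ^ 2 ∂μ =
      Module.finrank ℝ E * μ.real (ball 0 1) / (Module.finrank ℝ E + 2) := by
  generalize hdim : Module.finrank ℝ E = n at *
  have hn : 0 < n := hdim ▸ Module.finrank_pos
  have hradial : ∀ r : ℝ, r ^ (n - 1) • (Set.Iic 1).indicator (· ^ 2) r =
      (Set.Iic 1).indicator (· ^ (n + 1)) r := by
    intro r
    by_cases hr : r ∈ Set.Iic 1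
    · simp only [Set.indicator_of_mem hr, smul_eq_mul, ← pow_add]
      congr 1; omega
    · simp [Set.indicator_of_notMem hr]
  calc ∫ p in closedBall (0 : E) 1, ‖p‖ ^ 2 ∂μ
      = ∫ p, (Set.Iic 1).indicator (· ^ 2) ‖p‖ ∂μ := by
        rw [← MeasureTheory.integral_indicator measurableSet_closedBall]
        congr 1 with p
        by_cases hp : ‖p‖ ≤ 1 <;> simp [Set.indicator, hp]
    _ = n * μ.real (ball 0 1) * ∫ r in Set.Ioc 0 1, r ^ (n + 1) := by
        rw [integral_fun_norm_addHaar, hdim, nsmul_eq_mul, smul_eq_mul, mul_assoc]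
        simp only [hradial]
        rw [MeasureTheory.integral_indicator measurableSet_Iic, Measure.restrict_restrict
          measurableSet_Iic, Set.Iic_inter_Ioi]
    _ = n * μ.real (ball 0 1) / (n + 2) := by
        rw [← intervalIntegral.integral_of_le zero_le_one, integral_pow]
        push_cast
        ring

theorem EuclideanSpace.integral_closedBall_sq_apply_eq {ι : Type*} [Fintype ι] [DecidableEq ι]
    (i j : ι) :
    ∫ p in closedBall (0 : EuclideanSpace ℝ ι) 1, p i ^ 2 =
      ∫ p in closedBall (0 : EuclideanSpace ℝ ι) 1, p j ^ 2 := by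
  let e := LinearIsometryEquiv.piLpCongrLeft 2 ℝ ℝ (Equiv.swap i j)
  have he : ∀ p : EuclideanSpace ℝ ι, e p j = p i := fun p => by
    simp [e, LinearIsometryEquiv.piLpCongrLeft_apply, Equiv.piCongrLeft'_apply]
  have himage : e '' closedBall 0 1 = closedBall 0 1 := by
    rw [e.image_closedBall, map_zero]
  simp only [← he]
  rw [← e.measurePreserving.setIntegral_image_emb e.toHomeomorph.measurableEmbedding
    (fun p => p j ^ 2), himage]

theorem kappa_eq_mul_gammaBall (m : ℕ) (h0 : 0 < m) : kappa m = (m + 2) * gammaBall m h0 := by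
  have : Nonempty (Fin m) := ⟨⟨0, h0⟩⟩
  have hsum : ∫ p in closedBall (0 : EuclideanSpace ℝ (Fin m)) 1, ‖p‖ ^ 2 = m * gammaBall m h0 := by
    simp_rw [EuclideanSpace.norm_sq_eq, Real.norm_eq_abs, sq_abs]
    rw [integral_finsetSum _ fun j _ => ((EuclideanSpace.proj j).continuous.pow 2).continuousOn
      |>.integrableOn_compact (isCompact_closedBall 0 1)]
    simp [EuclideanSpace.integral_closedBall_sq_apply_eq _ (⟨0, h0⟩ : Fin m), gammaBall]
  have hrad := integral_closedBall_norm_sq (volume : Measure (EuclideanSpace ℝ (Fin m)))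
  rw [hsum, finrank_euclideanSpace_fin, measureReal_def,
    ← Measure.addHaar_closedBall_eq_addHaar_ball] at hrad
  rw [kappa]
  field_simp at hrad
  linear_combination -hrad

theorem hasDerivAt_integral_of_endpoint_eq_zero {g : ℝ → ℝ → ℝ}
    (hg : Continuous (Function.uncurry g)) {b : ℝ → ℝ} {s₁ : ℝ} (hb : DifferentiableAt ℝ b s₁)
    (hzero : g s₁ (b s₁) = 0) :
    HasDerivAt (fun s => ∫ t in b s₁..b s, g s t) 0 s₁ := by
  have hsmall : (fun s => ∫ t in b s₁..b s, g s t) =o[𝓝 s₁] fun s => b s - b s₁ := by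
    refine Asymptotics.IsLittleO.of_bound fun ε hε => ?_
    obtain ⟨δ, hδ, hgδ⟩ := Metric.continuousAt_iff.1 hg.continuousAt ε hε
    have hbδ : ∀ᶠ s in 𝓝 s₁, dist (b s) (b s₁) < δ :=
      hb.continuousAt.eventually (ball_mem_nhds _ hδ)
    filter_upwards [ball_mem_nhds s₁ hδ, hbδ] with s hs hbs
    refine norm_integral_le_of_norm_le_const fun t ht => ?_
    have htb : dist t (b s₁) < δ := (Set.abs_sub_left_of_mem_uIcc
      (Set.uIoc_subset_uIcc ht)).trans_lt hbs
    have := hgδ (show dist (s, t) (s₁, b s₁) < δ from max_lt hs htb)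
    simp only [Function.uncurry_apply_pair, hzero, dist_zero_right] at this
    exact this.le
  simpa [hasDerivAt_iff_isLittleO] using hsmall.trans_isBigO hb.hasDerivAt.isBigO_sub

theorem hasDerivAt_integral_of_continuous {F F' : ℝ → ℝ → ℝ} {a b s₁ : ℝ}
    (hF : Continuous (Function.uncurry F)) (hF' : Continuous (Function.uncurry F'))
    (hderiv : ∀ s t, HasDerivAt (F · t) (F' s t) s) :
    HasDerivAt (fun s => ∫ t in a..b, F s t) (∫ t in a..b, F' s₁ t) s₁ := by
  have hFt : ∀ s, Continuous (F s) := fun s => hF.comp (Continuous.prodMk_right s)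
  have hK := (isCompact_closedBall s₁ 1).prod (isCompact_uIcc (a := a) (b := b))
  obtain ⟨C, hC⟩ := hK.exists_bound_of_continuousOn hF'.continuousOn
  exact (hasDerivAt_integral_of_dominated_loc_of_deriv_le (bound := fun _ => C)
    (ball_mem_nhds s₁ one_pos) (.of_forall fun s => (hFt s).aestronglyMeasurable)
    ((hFt s₁).intervalIntegrable _ _)
    (hF'.comp (Continuous.prodMk_right s₁)).aestronglyMeasurable
    (.of_forall fun t ht s hs => hC (s, t) ⟨ball_subset_closedBall hs, Set.uIoc_subset_uIcc ht⟩)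
    intervalIntegrable_const (.of_forall fun t _ s _ => hderiv s t)).2

theorem hasDerivAt_integral_of_endpoints_eq_zero {F F' : ℝ → ℝ → ℝ} {a b : ℝ → ℝ} {s₁ : ℝ}
    (hF : Continuous (Function.uncurry F)) (hF' : Continuous (Function.uncurry F'))
    (hderiv : ∀ s t, HasDerivAt (F · t) (F' s t) s)
    (ha : DifferentiableAt ℝ a s₁) (hb : DifferentiableAt ℝ b s₁)
    (ha₀ : F s₁ (a s₁) = 0) (hb₀ : F s₁ (b s₁) = 0) :
    HasDerivAt (fun s => ∫ t in a s..b s, F s t) (∫ t in a s₁..b s₁, F' s₁ t) s₁ := by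
  have hint : ∀ s u v, IntervalIntegrable (F s) volume u v := fun s u v =>
    (hF.comp (Continuous.prodMk_right s)).intervalIntegrable u v
  have hsplit : ∀ s, ∫ t in a s..b s, F s t =
      (∫ t in a s₁..b s₁, F s t) + (∫ t in b s₁..b s, F s t) - ∫ t in a s₁..a s, F s t := by
    intro s
    rw [eq_sub_iff_add_eq, add_comm, integral_add_adjacent_intervals (hint s _ _) (hint s _ _),
      integral_add_adjacent_intervals (hint s _ _) (hint s _ _)]
  have := ((hasDerivAt_integral_of_continuous (a := a s₁) (b := b s₁) hF hF' hderiv).add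
    (hasDerivAt_integral_of_endpoint_eq_zero hF hb hb₀)).sub
    (hasDerivAt_integral_of_endpoint_eq_zero hF ha ha₀)
  rw [add_zero, sub_zero] at this
  exact this.congr_of_eventuallyEq (.of_forall hsplit)

section Chord

variable {f h : ℝ → ℝ} {q : ℝ}

theorem hasDerivAt_sq_sub_sq_rpow (hq : 0 ≤ q) {s : ℝ} (hh : DifferentiableAt ℝ h s) (t : ℝ) :
    HasDerivAt (fun s => (f t ^ 2 - (s * t + h s) ^ 2) ^ (q + 1))
      (-(2 * (q + 1)) * (s * t + h s) * (t + deriv h s) * (f t ^ 2 - (s * t + h s) ^ 2) ^ q) s := by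
  have hL : HasDerivAt (fun s => s * t + h s) (t + deriv h s) s :=
    ((hasDerivAt_id s).mul_const t).add hh.hasDerivAt |>.congr_deriv (by simp)
  refine (hL.pow 2).const_sub (f t ^ 2) |>.rpow_const (p := q + 1) (Or.inr (by linarith))
    |>.congr_deriv ?_
  simp only [Pi.pow_apply, add_sub_cancel_right]
  push_cast
  ring

theorem continuous_sq_sub_sq_rpow (hq : 0 ≤ q) (hf : Continuous f) (hh : Continuous h) :
    Continuous fun p : ℝ × ℝ => (f p.2 ^ 2 - (p.1 * p.2 + h p.1) ^ 2) ^ q :=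
  (Real.continuous_rpow_const hq).comp (by fun_prop)

theorem hasDerivAt_integral_sq_sub_sq_rpow {a b : ℝ → ℝ} {s : ℝ} (hq : 0 ≤ q)
    (hf : Continuous f) (hh : ContDiff ℝ 1 h)
    (ha : DifferentiableAt ℝ a s) (hb : DifferentiableAt ℝ b s)
    (ha₀ : f (a s) ^ 2 = (s * a s + h s) ^ 2) (hb₀ : f (b s) ^ 2 = (s * b s + h s) ^ 2)
    (hcentroid : ∫ t in a s..b s, (t + deriv h s) * (f t ^ 2 - (s * t + h s) ^ 2) ^ q = 0) :
    HasDerivAt (fun s => ∫ t in a s..b s, (f t ^ 2 - (s * t + h s) ^ 2) ^ (q + 1))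
      (-(2 * (q + 1) * s) *
        ∫ t in a s..b s, (t + deriv h s) ^ 2 * (f t ^ 2 - (s * t + h s) ^ 2) ^ q) s := by
  have hhc : Continuous h := hh.continuous
  have hh' : Continuous (deriv h) := hh.continuous_deriv le_rfl
  have hleibniz := hasDerivAt_integral_of_endpoints_eq_zero
    (continuous_sq_sub_sq_rpow (by linarith) hf hhc) (by fun_prop)
    (fun s t => hasDerivAt_sq_sub_sq_rpow hq (hh.differentiable one_ne_zero s) t) ha hb
    (by simp [ha₀, Real.zero_rpow (by linarith : q + 1 ≠ 0)])
    (by simp [hb₀, Real.zero_rpow (by linarith : q + 1 ≠ 0)])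
  refine hleibniz.congr_deriv ?_
  have hut : Continuous fun t => (f t ^ 2 - (s * t + h s) ^ 2) ^ q :=
    (continuous_sq_sub_sq_rpow hq hf hhc).comp (Continuous.prodMk_right s)
  have hsplit : ∀ t, -(2 * (q + 1)) * (s * t + h s) * (t + deriv h s) *
      (f t ^ 2 - (s * t + h s) ^ 2) ^ q =
      -(2 * (q + 1) * s) * ((t + deriv h s) ^ 2 * (f t ^ 2 - (s * t + h s) ^ 2) ^ q) +
      -(2 * (q + 1) * (h s - s * deriv h s)) *
        ((t + deriv h s) * (f t ^ 2 - (s * t + h s) ^ 2) ^ q) := fun t => by ring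
  rw [integral_congr fun t _ => hsplit t,
    intervalIntegral.integral_add ((by fun_prop : Continuous _).intervalIntegrable _ _)
      ((by fun_prop : Continuous _).intervalIntegrable _ _),
    intervalIntegral.integral_const_mul, intervalIntegral.integral_const_mul, hcentroid,
    mul_zero, add_zero]

end Chord

theorem hasDerivAt_sqrt_one_add_sq (s : ℝ) :
    HasDerivAt (fun s => √(1 + s ^ 2)) (s / √(1 + s ^ 2)) s := by
  have := ((hasDerivAt_pow 2 s).const_add 1).sqrt (by positivity)
  convert this using 1
  ring

theorem one_add_sq_rpow_three_halves (s : ℝ) : (1 + s ^ 2) ^ (3 / 2 : ℝ) = √(1 + s ^ 2) ^ 3 := by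
  rw [Real.rpow_div_two_eq_sqrt _ (by positivity)]
  exact_mod_cast Real.rpow_natCast _ 3

theorem eq_zero_of_forall_abs_mul_le {K C s₀ : ℝ} (h : ∀ s > s₀, |K| * s ≤ C) : K = 0 := by
  by_contra hK
  obtain ⟨s, hCs, hs⟩ := (((tendsto_id.const_mul_atTop (abs_pos.2 hK)).eventually_gt_atTop C).and
    (eventually_gt_atTop s₀)).exists
  exact (h s hs).not_gt hCs

section ODE

variable {a b : ℝ → ℝ} {s₀ c : ℝ}

theorem rpow_three_halves_mul_eq_of_sqrt_mul_eq (hs₀ : 0 ≤ s₀)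
    (ha : ∀ s > s₀, HasDerivAt a (-(s * b s)) s) (hc : ∀ s > s₀, √(1 + s ^ 2) * a s = c) :
    ∀ s > s₀, (1 + s ^ 2) ^ (3 / 2 : ℝ) * b s = c := by
  intro s hs
  have hconst : (fun s => √(1 + s ^ 2) * a s) =ᶠ[𝓝 s] fun _ => c :=
    eventually_of_mem (Ioi_mem_nhds hs) hc
  have hzero := ((hasDerivAt_sqrt_one_add_sq s).mul (ha s hs)).unique
    ((hasDerivAt_const s c).congr_of_eventuallyEq hconst)
  have ha_eq : a s = √(1 + s ^ 2) ^ 2 * b s := by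
    field_simp at hzero
    rw [mul_zero, mul_eq_zero, or_iff_right (by linarith)] at hzero
    linarith
  rw [one_add_sq_rpow_three_halves, ← hc s hs, ha_eq]
  ring

theorem sqrt_mul_eq_of_rpow_three_halves_mul_eq
    (ha : ∀ s > s₀, HasDerivAt a (-(s * b s)) s)
    (hbdd : ∃ M, ∀ s > s₀, |√(1 + s ^ 2) * a s| ≤ M)
    (hc : ∀ s > s₀, (1 + s ^ 2) ^ (3 / 2 : ℝ) * b s = c) :
    ∀ s > s₀, √(1 + s ^ 2) * a s = c := by
  set G : ℝ → ℝ := fun s => a s - c / √(1 + s ^ 2)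
  have hG : ∀ s > s₀, HasDerivAt G 0 s := by
    intro s hs
    have hW : 0 < √(1 + s ^ 2) := by positivity
    refine ((ha s hs).sub ((hasDerivAt_const s c).div (hasDerivAt_sqrt_one_add_sq s) hW.ne'))
      |>.congr_deriv ?_
    rw [← hc s hs, one_add_sq_rpow_three_halves]
    field_simp
    ring
  obtain ⟨K, hK⟩ := isOpen_Ioi.exists_is_const_of_deriv_eq_zero isPreconnected_Ioi
    (fun s hs => (hG s hs).differentiableAt.differentiableWithinAt)
    (fun s hs => (hG s hs).deriv)
  have hlinear : ∀ s > s₀, √(1 + s ^ 2) * a s = K * √(1 + s ^ 2) + c := by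
    intro s hs
    rw [← hK s hs]
    simp only [G]
    field_simp
    ring
  obtain ⟨M, hM⟩ := hbdd
  have hK0 : K = 0 := by
    refine eq_zero_of_forall_abs_mul_le (s₀ := s₀) (C := M + |c|) fun s hs => ?_
    have hsW : s ≤ √(1 + s ^ 2) := Real.le_sqrt_of_sq_le (by linarith)
    calc |K| * s ≤ |K| * √(1 + s ^ 2) := by gcongr
      _ = |(K * √(1 + s ^ 2) + c) - c| := by
        rw [add_sub_cancel_right, abs_mul, abs_of_nonneg (Real.sqrt_nonneg _)]
      _ ≤ |K * √(1 + s ^ 2) + c| + |c| := abs_sub _ _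
      _ ≤ M + |c| := by rw [← hlinear s hs]; linarith [hM s hs]
  intro s hs
  rw [hlinear s hs, hK0, zero_mul, zero_add]

end ODE

theorem moment_condition_equivalence
    (d : ℕ) (hd : 3 ≤ d) (s₀ : ℝ) (hs₀ : 0 ≤ s₀)
    (f h x y : ℝ → ℝ)
    (hf : ContDiff ℝ 1 f) (hh : ContDiff ℝ 1 h)
    (hxC : ContDiff ℝ 1 x) (hyC : ContDiff ℝ 1 y)
    (hy : ∀ s > s₀, f (y s) = s * y s + h s)
    (hx : ∀ s > s₀, -f (-x s) = s * (-x s) + h s)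
    -- the centroid condition
    (hcm : ∀ s > s₀,
      (∫ t in (-x s)..(y s),
        (t + deriv h s) * ((f t) ^ 2 - (s * t + h s) ^ 2) ^ (((d : ℝ) - 2) / 2)) = 0)
    -- boundedness on (s₀, ∞)
    (hbdd : ∃ M : ℝ, ∀ s > s₀,
      |gammaBall (d - 2) (by omega) * Real.sqrt (1 + s ^ 2) *
        (∫ t in (-x s)..(y s), ((f t) ^ 2 - (s * t + h s) ^ 2) ^ ((d : ℝ) / 2))| ≤ M) :
    ∀ c : ℝ,
      (∀ s > s₀,
        gammaBall (d - 2) (by omega) * Real.sqrt (1 + s ^ 2) *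
          (∫ t in (-x s)..(y s), ((f t) ^ 2 - (s * t + h s) ^ 2) ^ ((d : ℝ) / 2)) = c)
      ↔
      (∀ s > s₀,
        kappa (d - 2) * (1 + s ^ 2) ^ ((3 : ℝ) / 2) *
          (∫ t in (-x s)..(y s),
            (t + deriv h s) ^ 2 * ((f t) ^ 2 - (s * t + h s) ^ 2) ^ (((d : ℝ) - 2) / 2))
          = c) := by
  intro c
  set γ := gammaBall (d - 2) (by omega)
  have hκ : kappa (d - 2) = d * γ := by
    rw [kappa_eq_mul_gammaBall _ (by omega), Nat.cast_sub (by omega : 2 ≤ d)]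
    push_cast
    ring
  have hderiv : ∀ s > s₀, HasDerivAt
      (fun s => γ * ∫ t in (-x s)..(y s), ((f t) ^ 2 - (s * t + h s) ^ 2) ^ ((d : ℝ) / 2))
      (-(s * (kappa (d - 2) * ∫ t in (-x s)..(y s),
        (t + deriv h s) ^ 2 * ((f t) ^ 2 - (s * t + h s) ^ 2) ^ (((d : ℝ) - 2) / 2)))) s := by
    intro s hs
    have hI := hasDerivAt_integral_sq_sub_sq_rpow (a := fun s => -x s) (b := y)
      (q := ((d : ℝ) - 2) / 2) (by rify at hd; linarith) hf.continuous hh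
      (hxC.differentiable one_ne_zero s).neg (hyC.differentiable one_ne_zero s)
      (by rw [← hx s hs, neg_sq]) (by rw [hy s hs]) (hcm s hs)
    rw [show ((d : ℝ) - 2) / 2 + 1 = d / 2 by ring] at hI
    refine (hI.const_mul γ).congr_deriv ?_
    rw [hκ]
    ring
  constructor
  · intro hconst
    have := rpow_three_halves_mul_eq_of_sqrt_mul_eq (c := c) hs₀ hderiv
      fun s hs => by linear_combination hconst s hs
    exact fun s hs => by linear_combination this s hs
  · intro hconst
    obtain ⟨M, hM⟩ := hbdd
    have := sqrt_mul_eq_of_rpow_three_halves_mul_eq (c := c) hderiv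
      ⟨M, fun s hs => by rw [← mul_assoc, mul_comm _ γ]; exact hM s hs⟩
      fun s hs => by linear_combination hconst s hs
    exact fun s hs => by linear_combination this s hs
end

section
/- Let d ≥ 2 and let M ⊂ ℝ^d be a convex body. Then there exists ε₀ > 0 such that for every ε ∈ (0, ε₀), writing U_ε = {p ∈ ℝ^d : dist(p, ∂M) < ε}, one has vol_d(M ∩ U_ε) ≤ vol_d(U_ε \ M); that is, the part of the ε-neighborhood of ∂M lying inside M has volume at most that of the part lying outside M. -/
open MeasureTheory Metric
open scoped ENNReal RealInnerProductSpace

set_option maxHeartbeats 1000000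

section Aux

variable {n : ℕ}

/-- A 1-Lipschitz map does not increase volume of sets in Euclidean space. -/
lemma volume_image_le_of_lipschitz_aux {f : EuclideanSpace ℝ (Fin n) → EuclideanSpace ℝ (Fin n)}
    (hf : LipschitzWith 1 f) (s : Set (EuclideanSpace ℝ (Fin n))) :
    volume (f '' s) ≤ volume s := by
  have hH : μH[(Module.finrank ℝ (EuclideanSpace ℝ (Fin n)) : ℝ)] (f '' s) ≤ μH[(Module.finrank ℝ (EuclideanSpace ℝ (Fin n)) : ℝ)] s := by
    have := hf.hausdorffMeasure_image_le (d := (Module.finrank ℝ (EuclideanSpace ℝ (Fin n)) : ℝ)) (by positivity) s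
    simpa using this
  have hvol : (volume : Measure (EuclideanSpace ℝ (Fin n)))
      = Measure.addHaarScalarFactor (volume : Measure (EuclideanSpace ℝ (Fin n))) μH[(Module.finrank ℝ (EuclideanSpace ℝ (Fin n)) : ℝ)]
        • μH[(Module.finrank ℝ (EuclideanSpace ℝ (Fin n)) : ℝ)] :=
    Measure.isAddLeftInvariant_eq_smul _ _
  rw [hvol]
  simp only [Measure.smul_apply, ENNReal.smul_def, smul_eq_mul]
  exact mul_le_mul_right hH _

end Aux

theorem volume_inner_part_le_outer_part
    (d : ℕ) (hd : 2 ≤ d) (M : Set (EuclideanSpace ℝ (Fin d)))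
    (hMcpt : IsCompact M) (hMconv : Convex ℝ M) (hMint : (interior M).Nonempty) :
    ∃ ε₀ > (0 : ℝ), ∀ ε ∈ Set.Ioo (0 : ℝ) ε₀,
      volume (M ∩ {p : EuclideanSpace ℝ (Fin d) | infDist p (frontier M) < ε})
        ≤ volume ({p : EuclideanSpace ℝ (Fin d) | infDist p (frontier M) < ε} \ M) := by
  classical
  haveI : Nonempty (Fin d) := ⟨⟨0, by omega⟩⟩
  have hMne : M.Nonempty := hMint.mono interior_subset
  have hMcl : IsClosed M := hMcpt.isClosed
  have hMuniv : M ≠ Set.univ := by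
    intro h
    have : CompactSpace (EuclideanSpace ℝ (Fin d)) := isCompact_univ_iff.mp (h ▸ hMcpt)
    exact (not_compactSpace_iff.mpr inferInstance) this
  have hMcne : Mᶜ.Nonempty := Set.nonempty_compl.mpr hMuniv
  -- the metric projection onto M
  have hproj : ∀ x : EuclideanSpace ℝ (Fin d), ∃ v, v ∈ M ∧ ∀ m ∈ M, ⟪x - v, m - v⟫ ≤ 0 := by
    intro x
    obtain ⟨v, hv, hmin⟩ :=
      exists_norm_eq_iInf_of_complete_convex hMne hMcl.isComplete hMconv x
    exact ⟨v, hv, (norm_eq_iInf_iff_real_inner_le_zero hMconv hv).1 hmin⟩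
  choose π hπM hπ using hproj
  -- uniqueness of points satisfying the variational inequality
  have huniq : ∀ x v w : EuclideanSpace ℝ (Fin d), v ∈ M → w ∈ M →
      (∀ m ∈ M, ⟪x - v, m - v⟫ ≤ 0) → (∀ m ∈ M, ⟪x - w, m - w⟫ ≤ 0) → v = w := by
    intro x v w hv hw h1 h2
    have a1 := h1 w hw
    have a2 := h2 v hv
    have key : ‖w - v‖ ^ 2 ≤ 0 := by
      have h3 : ⟪x - v, w - v⟫ + ⟪x - w, v - w⟫ = ⟪w - v, w - v⟫ := by
        rw [show (v - w : EuclideanSpace ℝ (Fin d)) = -(w - v) by abel, inner_neg_right,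
          ← sub_eq_add_neg, ← inner_sub_left]
        congr 1
        abel
      rw [real_inner_self_eq_norm_sq] at h3
      linarith
    have : ‖w - v‖ = 0 := by nlinarith [norm_nonneg (w - v)]
    have : w - v = 0 := by rwa [norm_eq_zero] at this
    have : w = v := by rwa [sub_eq_zero] at this
    exact this.symm
  -- the 1-Lipschitz reflection map
  set ψ : EuclideanSpace ℝ (Fin d) → EuclideanSpace ℝ (Fin d) := fun x => (2 : ℝ) • π x - x with hψdef
  have hlip : LipschitzWith 1 ψ := by
    refine LipschitzWith.of_dist_le_mul fun x y => ?_
    rw [NNReal.coe_one, one_mul, dist_eq_norm, dist_eq_norm]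
    have hmono : ‖π x - π y‖ ^ 2 ≤ ⟪π x - π y, x - y⟫ := by
      have hA : 0 ≤ ⟪π x - π y, x - π x⟫ := by
        have a1 := hπ x (π y) (hπM y)
        have h' : ⟪x - π x, π y - π x⟫ = -⟪π x - π y, x - π x⟫ := by
          rw [show (π y - π x : EuclideanSpace ℝ (Fin d)) = -(π x - π y) by abel,
            inner_neg_right, real_inner_comm]
        linarith
      have hB : ⟪π x - π y, y - π y⟫ ≤ 0 := by
        have a2 := hπ y (π x) (hπM x)
        have h' : ⟪y - π y, π x - π y⟫ = ⟪π x - π y, y - π y⟫ := real_inner_comm _ _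
        linarith
      have hexp : ⟪π x - π y, x - y⟫
          = ‖π x - π y‖ ^ 2 + ⟪π x - π y, x - π x⟫ - ⟪π x - π y, y - π y⟫ := by
        rw [← real_inner_self_eq_norm_sq, ← inner_add_right, ← inner_sub_right]
        congr 1
        abel
      linarith
    have hsq : ‖ψ x - ψ y‖ ^ 2 ≤ ‖x - y‖ ^ 2 := by
      have e : ψ x - ψ y = (2 : ℝ) • (π x - π y) - (x - y) := by
        simp only [hψdef]
        rw [smul_sub]
        abel
      rw [e, norm_sub_sq_real, real_inner_smul_left, norm_smul]
      simp only [Real.norm_ofNat]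
      nlinarith
    nlinarith [norm_nonneg (ψ x - ψ y), norm_nonneg (x - y)]
  refine ⟨1, one_pos, fun ε hε => ?_⟩
  set U : Set (EuclideanSpace ℝ (Fin d)) := {p : EuclideanSpace ℝ (Fin d) | infDist p (frontier M) < ε} with hUdef
  -- key inclusion: the inner part minus the frontier is contained in ψ '' (U \ M)
  have hsub : (M ∩ U) \ frontier M ⊆ ψ '' (U \ M) := by
    rintro p ⟨⟨hpM, hpU⟩, hpF⟩
    have hpint : p ∈ interior M := by
      rw [hMcl.frontier_eq] at hpF
      simp only [Set.mem_diff, not_and, not_not] at hpF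
      exact hpF hpM
    -- the nearest point of the complement / frontier
    obtain ⟨q, hqF, hqd⟩ := hMcpt.exists_mem_frontier_infDist_compl_eq_dist hpM
    set t : ℝ := infDist p Mᶜ with htdef
    have hball : ball p t ⊆ M := by
      simpa using ball_infDist_compl_subset (x := p) (s := M)
    have htpos : 0 < t := by
      rw [htdef, ← infDist_closure]
      refine (isClosed_closure.notMem_iff_infDist_pos hMcne.closure).mp ?_
      rw [closure_compl]
      exact fun h => h hpint
    have htq : dist p q = t := hqd.symm
    have htlt : t < ε := by
      have h1 : t ≤ infDist p (frontier M) := by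
        have hsubF : frontier M ⊆ closure Mᶜ := by
          rw [frontier_eq_closure_inter_closure, hMcl.closure_eq]
          exact Set.inter_subset_right
        calc t = infDist p (closure Mᶜ) := by rw [htdef, infDist_closure]
          _ ≤ infDist p (frontier M) := infDist_le_infDist_of_subset hsubF ⟨q, hqF⟩
      exact lt_of_le_of_lt h1 hpU
    -- supporting inequality at q
    have hsupp : ∀ m ∈ M, ⟪q - p, m - q⟫ ≤ 0 := by
      intro m hm
      by_contra hc
      push_neg at hc
      set c : ℝ := ⟪q - p, m - q⟫ with hcdef
      set u : EuclideanSpace ℝ (Fin d) := m - p with hu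
      set s : ℝ := min (1/2 : ℝ) (c / (1 + ‖u‖ ^ 2)) with hs
      have hspos : 0 < s := lt_min (by norm_num) (by positivity)
      have hs12 : s ≤ 1/2 := min_le_left _ _
      have hsc : s * (1 + ‖u‖ ^ 2) ≤ c := by
        have := min_le_right (1/2 : ℝ) (c / (1 + ‖u‖ ^ 2))
        have hpos : (0:ℝ) < 1 + ‖u‖ ^ 2 := by positivity
        calc s * (1 + ‖u‖ ^ 2) ≤ (c / (1 + ‖u‖ ^ 2)) * (1 + ‖u‖ ^ 2) := by
              apply mul_le_mul_of_nonneg_right this hpos.le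
          _ = c := by field_simp
      -- the ball around the convex combination is inside M
      have hball2 : ball ((1 - s) • p + s • m) ((1 - s) * t) ⊆ M := by
        intro y hy
        have h1s : (0:ℝ) < 1 - s := by linarith
        set z : EuclideanSpace ℝ (Fin d) := (1 - s)⁻¹ • (y - s • m) with hz
        have hz1 : (1 - s) • z = y - s • m := by
          rw [hz, smul_smul, mul_inv_cancel₀ h1s.ne', one_smul]
        have key : y - ((1 - s) • p + s • m) = (1 - s) • (z - p) := by
          rw [smul_sub, hz1]
          abel
        have hzball : z ∈ ball p t := by
          rw [mem_ball, dist_eq_norm]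
          have hy' : ‖y - ((1 - s) • p + s • m)‖ < (1 - s) * t := by
            rwa [mem_ball, dist_eq_norm] at hy
          rw [key, norm_smul, Real.norm_eq_abs, abs_of_pos h1s] at hy'
          exact lt_of_mul_lt_mul_left hy' h1s.le
        have hzM : z ∈ M := hball hzball
        have hyz : y = (1 - s) • z + s • m := by
          rw [hz1]
          abel
        rw [hyz]
        exact hMconv hzM hm (by linarith) hspos.le (by ring)
      -- q lies in that ball
      have hqball : q ∈ ball ((1 - s) • p + s • m) ((1 - s) * t) := by
        rw [mem_ball, dist_eq_norm]
        have e : q - ((1 - s) • p + s • m) = (q - p) - s • u := by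
          rw [hu, smul_sub]
          module
        have hwn : ‖q - p‖ = t := by rw [← htq, dist_eq_norm, norm_sub_rev]
        have hinnwu : ⟪q - p, u⟫ = c + t ^ 2 := by
          have : u = (m - q) + (q - p) := by rw [hu]; abel
          rw [this, inner_add_right, real_inner_self_eq_norm_sq, hwn, ← hcdef]
        have hsq : ‖(q - p) - s • u‖ ^ 2 < ((1 - s) * t) ^ 2 := by
          rw [norm_sub_sq_real, real_inner_smul_right, norm_smul, hinnwu, hwn]
          rw [Real.norm_eq_abs, abs_of_pos hspos]
          rw [mul_pow]
          nlinarith [sq_nonneg (‖u‖), htpos]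
        rw [e]
        have h1 : (0:ℝ) ≤ (1 - s) * t := by nlinarith
        exact lt_of_pow_lt_pow_left₀ 2 h1 hsq
      have : q ∈ interior M :=
        mem_interior.mpr ⟨_, hball2, isOpen_ball, hqball⟩
      rw [hMcl.frontier_eq] at hqF
      exact hqF.2 this
    -- the reflected point
    set x : EuclideanSpace ℝ (Fin d) := q + (q - p) with hx
    have hxq : x - q = q - p := by rw [hx]; abel
    have hxM : x ∉ M := by
      intro hxM
      have := hsupp x hxM
      rw [hxq, real_inner_self_eq_norm_sq] at this
      have hwn : ‖q - p‖ = t := by rw [← htq, dist_eq_norm, norm_sub_rev]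
      nlinarith
    have hxU : x ∈ U := by
      have : infDist x (frontier M) ≤ dist x q := infDist_le_dist_of_mem hqF
      have hdxq : dist x q = t := by
        rw [dist_eq_norm, hxq, ← norm_sub_rev, ← dist_eq_norm, htq]
      rw [hUdef]
      simp only [Set.mem_setOf_eq]
      calc infDist x (frontier M) ≤ dist x q := infDist_le_dist_of_mem hqF
        _ = t := hdxq
        _ < ε := htlt
    have hπx : π x = q := by
      apply huniq x (π x) q (hπM x) (hMcl.frontier_eq ▸ hqF).1 (hπ x)
      intro m hm
      rw [hxq]
      exact hsupp m hm
    refine ⟨x, ⟨hxU, hxM⟩, ?_⟩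
    simp only [hψdef]
    rw [hπx, hx]
    module
  -- conclude via measures
  calc volume (M ∩ U)
      = volume ((M ∩ U) \ frontier M) :=
        (measure_diff_null (hMconv.addHaar_frontier volume)).symm
    _ ≤ volume (ψ '' (U \ M)) := measure_mono hsub
    _ ≤ volume (U \ M) := volume_image_le_of_lipschitz_aux hlip _
end

section
/- Let d ≥ 2, let K ⊂ ℝ^d be a convex body and let δ ∈ (0, vol_d(K)). Let ξ, η ∈ S^{d−1} and t, u ∈ ℝ, and set A = K ∩ {p : p·ξ ≤ t} and B = K ∩ {p : p·η ≤ u}. Assume vol_d(A) = vol_d(B) = δ and vol_d(A △ B) > 0, where A △ B = (A \ B) ∪ (B \ A). Then the centroids satisfy ξ · C(B) > ξ · C(A). (Consequently, the surface of centers {C(K ∩ H⁻(ξ)) : ξ ∈ S^{d−1}} at level δ is supported at each point C(K ∩ H⁻(ξ)) by the hyperplane through it parallel to the cutting hyperplane H(ξ), touching only at that point — Dupin's theorem.) -/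
/-!
Both cuts have volume `δ`, so `A \ B` and `B \ A` have equal volume, and it is positive since
`A ∆ B` has positive volume. On `A \ B` the height `⟪ξ, p⟫` is at most `t`, while on `B \ A`
(which lies in `K` but outside `A`) it exceeds `t`. Hence moving mass from `A \ B` to `B \ A`
strictly increases the integral of the height, and dividing by `δ` compares the centroids.
-/

open MeasureTheory Metric
open scoped InnerProductSpace ENNReal

/-- The centroid `(1/μ(A)) ∫_A p dμ(p)` of a set `A` with respect to a measure `μ`. -/
noncomputable def centroid {E : Type*} [NormedAddCommGroup E] [NormedSpace ℝ E]
    [MeasurableSpace E] (μ : Measure E) (A : Set E) : E :=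
  ((μ A).toReal)⁻¹ • ∫ p in A, p ∂μ

open scoped symmDiff

namespace MeasureTheory

variable {α : Type*} [MeasurableSpace α] {μ : Measure α} {f : α → ℝ} {s A B : Set α} {c : ℝ}

theorem setIntegral_le_mul_measureReal_of_le (hs : MeasurableSet s) (hμs : μ s ≠ ∞)
    (hf : ∀ x ∈ s, f x ≤ c) (hfint : IntegrableOn f s μ) :
    ∫ x in s, f x ∂μ ≤ c * μ.real s := by
  simpa [mul_comm] using setIntegral_mono_on hfint (integrableOn_const hμs) hs hf

theorem mul_measureReal_lt_setIntegral_of_lt (hs : MeasurableSet s) (hμs : μ s ≠ ∞)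
    (hμs₀ : 0 < μ s) (hf : ∀ x ∈ s, c < f x) (hfint : IntegrableOn f s μ) :
    c * μ.real s < ∫ x in s, f x ∂μ := by
  have hc : IntegrableOn (fun _ ↦ c) s μ := integrableOn_const hμs
  have hpos : 0 < ∫ x in s, (f x - c) ∂μ := by
    refine (setIntegral_pos_iff_support_of_nonneg_ae ?_ (hfint.sub hc)).mpr ?_
    · exact (ae_restrict_iff' hs).mpr (ae_of_all _ fun x hx ↦ sub_nonneg.mpr (hf x hx).le)
    · refine hμs₀.trans_le (measure_mono fun x hx ↦ ⟨?_, hx⟩)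
      exact sub_ne_zero.mpr (hf x hx).ne'
  rw [integral_sub hfint hc, setIntegral_const, smul_eq_mul] at hpos
  linarith

theorem setIntegral_lt_setIntegral_of_sdiff (hA : MeasurableSet A) (hB : MeasurableSet B)
    (hμ : μ (A \ B) = μ (B \ A)) (hμB : μ B ≠ ∞) (hBA : 0 < μ (B \ A))
    (hfA : IntegrableOn f A μ) (hfB : IntegrableOn f B μ)
    (hle : ∀ x ∈ A \ B, f x ≤ c) (hlt : ∀ x ∈ B \ A, c < f x) :
    ∫ x in A, f x ∂μ < ∫ x in B, f x ∂μ := by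
  have hμBA : μ (B \ A) ≠ ∞ := ne_top_of_le_ne_top hμB (measure_mono Set.sdiff_subset)
  have hdiff : ∫ x in A \ B, f x ∂μ < ∫ x in B \ A, f x ∂μ :=
    calc ∫ x in A \ B, f x ∂μ
        ≤ c * μ.real (A \ B) :=
          setIntegral_le_mul_measureReal_of_le (hA.diff hB) (hμ ▸ hμBA) hle
            (hfA.mono_set Set.sdiff_subset)
      _ = c * μ.real (B \ A) := by rw [measureReal_def, hμ, ← measureReal_def]
      _ < ∫ x in B \ A, f x ∂μ :=
          mul_measureReal_lt_setIntegral_of_lt (hB.diff hA) hμBA hBA hlt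
            (hfB.mono_set Set.sdiff_subset)
  rw [← integral_inter_add_sdiff hB hfA, ← integral_inter_add_sdiff hA hfB, Set.inter_comm B A]
  linarith

theorem setAverage_lt_setAverage_of_sdiff (hA : MeasurableSet A) (hB : MeasurableSet B)
    (hμ : μ A = μ B) (hμB : μ B ≠ ∞) (hAB : 0 < μ (A ∆ B))
    (hfA : IntegrableOn f A μ) (hfB : IntegrableOn f B μ)
    (hle : ∀ x ∈ A \ B, f x ≤ c) (hlt : ∀ x ∈ B \ A, c < f x) :
    ⨍ x in A, f x ∂μ < ⨍ x in B, f x ∂μ := by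
  have hsdiff : μ (A \ B) = μ (B \ A) :=
    measure_sdiff_symm hA.nullMeasurableSet hB.nullMeasurableSet hμ
      (ne_top_of_le_ne_top hμB (measure_mono Set.inter_subset_right))
  have hBA : 0 < μ (B \ A) :=
    pos_iff_ne_zero.mpr fun h ↦ hAB.ne' (measure_union_null (hsdiff ▸ h) h)
  have hμB₀ : 0 < μ.real B :=
    ENNReal.toReal_pos (hBA.trans_le (measure_mono Set.sdiff_subset)).ne' hμB
  rw [setAverage_eq, setAverage_eq, measureReal_def, hμ, ← measureReal_def, smul_eq_mul,
    smul_eq_mul]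
  exact mul_lt_mul_of_pos_left
    (setIntegral_lt_setIntegral_of_sdiff hA hB hsdiff hμB hBA hfA hfB hle hlt) (inv_pos.mpr hμB₀)

end MeasureTheory

theorem inner_centroid {E : Type*} [NormedAddCommGroup E] [InnerProductSpace ℝ E]
    [CompleteSpace E] [MeasurableSpace E] {μ : Measure E} {A : Set E}
    (hA : IntegrableOn (fun p ↦ p) A μ) (ξ : E) :
    ⟪ξ, centroid μ A⟫_ℝ = ⨍ p in A, ⟪ξ, p⟫_ℝ ∂μ := by
  rw [centroid, setAverage_eq, real_inner_smul_right, integral_inner hA, smul_eq_mul]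
  rfl

theorem centroid_of_equal_volume_cut_strictly_above_general
    (d : ℕ) (K : Set (EuclideanSpace ℝ (Fin d)))
    (hKcpt : IsCompact K)
    (δ : ℝ≥0∞)
    (ξ η : EuclideanSpace ℝ (Fin d))
    (t u : ℝ)
    (A B : Set (EuclideanSpace ℝ (Fin d)))
    (hA : A = K ∩ {p | ⟪p, ξ⟫_ℝ ≤ t})
    (hB : B = K ∩ {p | ⟪p, η⟫_ℝ ≤ u})
    (hvA : volume A = δ) (hvB : volume B = δ)
    (hsym : 0 < volume ((A \ B) ∪ (B \ A))) :
    ⟪ξ, centroid volume A⟫_ℝ < ⟪ξ, centroid volume B⟫_ℝ := by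
  have hcut : ∀ ζ s, MeasurableSet (K ∩ {p | ⟪p, ζ⟫_ℝ ≤ s}) := fun ζ s ↦
    hKcpt.measurableSet.inter (measurableSet_le (by fun_prop) measurable_const)
  have hAK : A ⊆ K := hA ▸ Set.inter_subset_left
  have hBK : B ⊆ K := hB ▸ Set.inter_subset_left
  have hid : IntegrableOn (fun p ↦ p) K := continuous_id.continuousOn.integrableOn_compact hKcpt
  have hξK : IntegrableOn (fun p ↦ ⟪ξ, p⟫_ℝ) K :=
    (continuous_const.inner continuous_id).continuousOn.integrableOn_compact hKcpt
  rw [inner_centroid (hid.mono_set hAK), inner_centroid (hid.mono_set hBK)]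
  refine setAverage_lt_setAverage_of_sdiff (hA ▸ hcut ξ t) (hB ▸ hcut η u) (hvA.trans hvB.symm)
    (measure_mono hBK |>.trans_lt hKcpt.measure_lt_top).ne hsym
    (hξK.mono_set hAK) (hξK.mono_set hBK) (c := t) ?_ ?_
  · intro p hp
    rw [real_inner_comm]
    exact (hA ▸ hp.1).2
  · intro p hp
    rw [real_inner_comm]
    exact not_le.mp fun h ↦ hp.2 (hA ▸ ⟨hBK hp.1, h⟩)

theorem centroid_of_equal_volume_cut_strictly_above
    (d : ℕ) (hd : 2 ≤ d) (K : Set (EuclideanSpace ℝ (Fin d)))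
    (hKcpt : IsCompact K) (hKconv : Convex ℝ K) (hKint : (interior K).Nonempty)
    (δ : ℝ≥0∞) (hδ0 : 0 < δ) (hδK : δ < volume K)
    (ξ η : EuclideanSpace ℝ (Fin d)) (hξ : ‖ξ‖ = 1) (hη : ‖η‖ = 1)
    (t u : ℝ)
    (A B : Set (EuclideanSpace ℝ (Fin d)))
    (hA : A = K ∩ {p | ⟪p, ξ⟫_ℝ ≤ t})
    (hB : B = K ∩ {p | ⟪p, η⟫_ℝ ≤ u})
    (hvA : volume A = δ) (hvB : volume B = δ)
    (hsym : 0 < volume ((A \ B) ∪ (B \ A))) :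
    ⟪ξ, centroid volume A⟫_ℝ < ⟪ξ, centroid volume B⟫_ℝ :=
  centroid_of_equal_volume_cut_strictly_above_general d K hKcpt δ ξ η t u A B hA hB hvA hvB hsym
end
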